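/- arXiv:2205.03796 — 2 statements merged into one kernel-verified Lean document; each statement's English description precedes it below -/
import Mathlib

section
/- For every n ≥ 1 and every positive real q, the q-Eulerian polynomial A_n(x;q) = ∑_{w ∈ S_n} q^{inv(w)} x^{des(w)} is real-rooted. -/
/-!
Group the permutations of `S_(n+1)` by their first letter `a`, giving polynomials `A_{n,a}(x)`.
Prepending a letter `b` to a permutation of the remaining letters adds `b` inversions, and one
descent exactly when the old first letter is smaller than `b`; hence
`A_{n+1,b} = q^b (x ∑_{a<b} A_{n,a} + ∑_{a≥b} A_{n,a})`.
Fix `z` in the open upper half-plane. By induction on `n`, the values `A_{n,a}(z)` are nonzero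
and their arguments increase with `a` inside a window of width `arg z < π`: the recursion
preserves this because every orientation `Im (conj u * v)` it produces expands into nonnegative
terms. So the values lie in a sector of opening less than `π` and their sum `A_(n+1)(z)` is
nonzero. A real polynomial without roots in the upper half-plane has none in the lower one either.
-/

open Polynomial

/-- A real polynomial is real-rooted if it is zero or all its roots, counted with
multiplicity, are real. -/
def RealRooted (f : Polynomial ℝ) : Prop :=
  f = 0 ∨ Multiset.card f.roots = f.natDegree

/-- The number of inversions of a permutation `w` of `Fin n`:
pairs `i < j` with `w i > w j`. -/
def invP {n : ℕ} (w : Equiv.Perm (Fin n)) : ℕ :=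
  (Finset.univ.filter fun p : Fin n × Fin n => p.1 < p.2 ∧ w p.2 < w p.1).card

/-- The word `(w(1),…,w(n))` of a permutation, as a list of values in `{0,…,n-1}`. -/
def wordOf {n : ℕ} (w : Equiv.Perm (Fin n)) : List ℕ :=
  List.ofFn fun i => (w i).val

/-- The number of descents of a word: indices `i` with `L_i > L_{i+1}`. -/
def desL (L : List ℕ) : ℕ :=
  ((Finset.range (L.length - 1)).filter fun i => L.getD (i + 1) 0 < L.getD i 0).card

open Finset

section Combinatorics

variable {n : ℕ}

/-- The permutation with word `v, v.succAbove (w 0), …, v.succAbove (w (n - 1))`. -/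
def consPerm (v : Fin (n + 1)) (w : Equiv.Perm (Fin n)) : Equiv.Perm (Fin (n + 1)) :=
  (finSuccEquiv n).trans ((Equiv.optionCongr w).trans (finSuccEquiv' v).symm)

@[simp] lemma consPerm_zero (v : Fin (n + 1)) (w : Equiv.Perm (Fin n)) : consPerm v w 0 = v := by
  simp [consPerm]

@[simp] lemma consPerm_succ (v : Fin (n + 1)) (w : Equiv.Perm (Fin n)) (i : Fin n) :
    consPerm v w i.succ = v.succAbove (w i) := by
  simp [consPerm]

lemma consPerm_bijective :
    Function.Bijective fun p : Fin (n + 1) × Equiv.Perm (Fin n) => consPerm p.1 p.2 := by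
  refine (Fintype.bijective_iff_injective_and_card _).2
    ⟨?_, by simp [Fintype.card_perm, Nat.factorial_succ]⟩
  rintro ⟨v, w⟩ ⟨v', w'⟩ h
  obtain rfl : v = v' := by simpa using DFunLike.congr_fun h 0
  obtain rfl : w = w' := Equiv.ext fun i => by simpa using DFunLike.congr_fun h i.succ
  rfl

lemma invP_eq_sum_card (σ : Equiv.Perm (Fin n)) :
    invP σ = ∑ i, #{j | i < j ∧ σ j < σ i} := by
  rw [invP, card_filter, Fintype.sum_prod_type]
  simp only [card_filter]

lemma invP_consPerm (v : Fin (n + 1)) (w : Equiv.Perm (Fin n)) :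
    invP (consPerm v w) = v + invP w := by
  rw [invP_eq_sum_card, invP_eq_sum_card, Fin.sum_univ_succ]
  congr 1
  · have : #{j : Fin n | (w j).castSucc < v} = #{y : Fin n | (y : ℕ) < v} :=
      card_equiv w (by simp [Fin.lt_def])
    simpa [Fin.card_filter_univ_succ', Fin.succAbove_lt_iff_castSucc_lt,
      Fin.card_filter_val_lt, this] using Nat.lt_succ_iff.mp v.isLt
  · refine sum_congr rfl fun i _ => ?_
    simp [Fin.card_filter_univ_succ', Fin.succAbove_lt_succAbove_iff]

lemma desL_wordOf (σ : Equiv.Perm (Fin (n + 1))) :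
    desL (wordOf σ) = #{i : Fin n | σ i.succ < σ i.castSucc} := by
  rw [desL, card_filter, card_filter, wordOf, List.length_ofFn, Nat.add_sub_cancel, sum_range]
  refine sum_congr rfl fun i _ => ?_
  rw [List.getD_eq_getElem _ _ (by simp), List.getD_eq_getElem _ _ (by simp), List.getElem_ofFn,
    List.getElem_ofFn]
  rfl

lemma desL_consPerm (v : Fin (n + 2)) (w : Equiv.Perm (Fin (n + 1))) :
    desL (wordOf (consPerm v w)) = (if (w 0).castSucc < v then 1 else 0) + desL (wordOf w) := by
  rw [desL_wordOf, desL_wordOf, Fin.card_filter_univ_succ']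
  have h1 : consPerm v w 1 = v.succAbove (w 0) := consPerm_succ v w 0
  simp [h1, Fin.succAbove_lt_succAbove_iff, Fin.succAbove_lt_iff_castSucc_lt]

end Combinatorics

section MixedSum

variable {S : Type*} [Semiring S]

def mixedSum (x : S) (F : ℕ → S) (m d : ℕ) : S :=
  x * ∑ i ∈ range d, F i + ∑ i ∈ Ico d m, F i

lemma sum_ite_mul_eq_mixedSum (x : S) (F : ℕ → S) {m d : ℕ} (hd : d ≤ m) :
    ∑ i ∈ range m, (if i < d then x else 1) * F i = mixedSum x F m d := by
  rw [← sum_range_add_sum_Ico _ hd, mixedSum, mul_sum]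
  congr 1
  · exact sum_congr rfl fun i hi => by rw [if_pos (mem_range.1 hi)]
  · exact sum_congr rfl fun i hi => by rw [if_neg (mem_Ico.1 hi).1.not_gt, one_mul]

lemma map_mixedSum {T G : Type*} [Semiring T] [FunLike G S T] [RingHomClass G S T] (f : G)
    (x : S) (F : ℕ → S) (m d : ℕ) :
    f (mixedSum x F m d) = mixedSum (f x) (fun i => f (F i)) m d := by
  simp [mixedSum, map_sum]

end MixedSum

section RefinedEulerian

variable {R : Type*} [CommSemiring R]

noncomputable def refinedQEulerian (q : R) (n a : ℕ) : R[X] :=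
  ∑ w : Equiv.Perm (Fin (n + 1)) with (w 0 : ℕ) = a, C (q ^ invP w) * X ^ desL (wordOf w)

lemma sum_mul_refinedQEulerian (q : R) (n : ℕ) (g : ℕ → R[X]) :
    ∑ a ∈ range (n + 1), g a * refinedQEulerian q n a =
      ∑ w : Equiv.Perm (Fin (n + 1)), g (w 0) * (C (q ^ invP w) * X ^ desL (wordOf w)) := by
  simp_rw [refinedQEulerian, mul_sum]
  rw [← sum_fiberwise_of_maps_to (g := fun w : Equiv.Perm (Fin (n + 1)) => (w 0 : ℕ))
    fun w _ => mem_range.2 (w 0).isLt]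
  exact sum_congr rfl fun a _ => sum_congr rfl fun w hw => by rw [(mem_filter.1 hw).2]

lemma refinedQEulerian_succ (q : R) (n : ℕ) {b : ℕ} (hb : b < n + 2) :
    refinedQEulerian q (n + 1) b = C (q ^ b) * mixedSum X (refinedQEulerian q n) (n + 1) b := by
  set v : Fin (n + 2) := ⟨b, hb⟩
  have hcons (w : Equiv.Perm (Fin (n + 1))) :
      C (q ^ invP (consPerm v w)) * X ^ desL (wordOf (consPerm v w)) =
        C (q ^ b) *
          ((if (w 0 : ℕ) < b then X else 1) * (C (q ^ invP w) * X ^ desL (wordOf w))) := by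
    rw [invP_consPerm, desL_consPerm, show (v : ℕ) = b from rfl, pow_add, pow_add, C_mul]
    by_cases h : (w 0 : ℕ) < b
    · rw [if_pos (show (w 0).castSucc < v from h), if_pos h, pow_one]; ring
    · rw [if_neg (show ¬(w 0).castSucc < v from h), if_neg h, pow_zero]; ring
  calc refinedQEulerian q (n + 1) b
      = ∑ w : Equiv.Perm (Fin (n + 1)),
          C (q ^ invP (consPerm v w)) * X ^ desL (wordOf (consPerm v w)) := by
        rw [refinedQEulerian, sum_filter,
          ← (Equiv.ofBijective _ consPerm_bijective).sum_comp, Fintype.sum_prod_type,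
          sum_eq_single v (fun u _ hu => sum_eq_zero fun w _ => if_neg ?_) (by simp)]
        · simp [v]
        · simpa [v, Fin.ext_iff] using hu
    _ = C (q ^ b) * ∑ a ∈ range (n + 1), (if a < b then X else 1) * refinedQEulerian q n a := by
        simp_rw [hcons, ← mul_sum, sum_mul_refinedQEulerian]
    _ = C (q ^ b) * mixedSum X (refinedQEulerian q n) (n + 1) b := by
        rw [sum_ite_mul_eq_mixedSum _ _ (by omega)]

lemma refinedQEulerian_zero_zero (q : R) : refinedQEulerian q 0 0 = 1 := by
  have hinv : invP (1 : Equiv.Perm (Fin 1)) = 0 := by decide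
  have hdes : desL (wordOf (1 : Equiv.Perm (Fin 1))) = 0 := by decide
  change ∑ w : Equiv.Perm (Fin 1) with (w 0 : ℕ) = 0, C (q ^ invP w) * X ^ desL (wordOf w) = 1
  rw [filter_true_of_mem fun w _ => Fin.val_eq_zero (w 0),
    Fintype.sum_subsingleton _ 1, hinv, hdes, pow_zero, pow_zero, C_1, mul_one]

end RefinedEulerian

section Wedge

open Complex ComplexConjugate

/-- `wedge u v = ‖u‖ * ‖v‖ * sin (arg v - arg u)`. -/
def wedge (u v : ℂ) : ℝ := (conj u * v).im

lemma wedge_eq (u v : ℂ) : wedge u v = u.re * v.im - u.im * v.re := by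
  simp [wedge]; ring

lemma wedge_self (u : ℂ) : wedge u u = 0 := by
  rw [wedge_eq]; ring

lemma wedge_zero_right (u : ℂ) : wedge u 0 = 0 := by simp [wedge]

lemma wedge_sum_left {ι : Type*} (s : Finset ι) (u : ι → ℂ) (v : ℂ) :
    wedge (∑ i ∈ s, u i) v = ∑ i ∈ s, wedge (u i) v := by
  simp [wedge, sum_mul, im_sum]

lemma wedge_sum_right {ι : Type*} (s : Finset ι) (u : ℂ) (v : ι → ℂ) :
    wedge u (∑ i ∈ s, v i) = ∑ i ∈ s, wedge u (v i) := by
  simp [wedge, mul_sum, im_sum]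

lemma wedge_mul_mul (c u v : ℂ) : wedge (c * u) (c * v) = normSq c * wedge u v := by
  simp only [wedge_eq, mul_re, mul_im, normSq_apply]; ring

lemma wedge_ofReal_mul_ofReal (a b : ℝ) (u v : ℂ) :
    wedge (a * u) (b * v) = a * b * wedge u v := by
  simp only [wedge_eq, re_ofReal_mul, im_ofReal_mul]; ring

lemma wedge_self_mul (u c : ℂ) : wedge u (c * u) = normSq u * c.im := by
  simp only [wedge_eq, mul_re, mul_im, normSq_apply]; ring

/-- Cramer's rule in `ℝ²`. -/
lemma ofReal_wedge_mul (u v w : ℂ) : (wedge u v : ℂ) * w = wedge w v * u + wedge u w * v := by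
  apply Complex.ext <;> simp [wedge_eq] <;> ring

lemma wedge_sub_pos {u v w : ℂ} (huv : 0 < wedge u v) (hu : 0 ≤ wedge u w)
    (hv : 0 ≤ wedge w v) (hw : w ≠ 0) : 0 < wedge (u - v) w := by
  have hsplit : wedge (u - v) w = wedge u w + wedge w v := by
    simp only [wedge_eq, sub_re, sub_im]; ring
  rw [hsplit]
  by_contra! hle
  have h0 : (wedge u v : ℂ) * w = 0 := by
    rw [ofReal_wedge_mul, show wedge w v = 0 by linarith, show wedge u w = 0 by linarith]; simp
  exact hw ((mul_eq_zero.1 h0).resolve_left (by exact_mod_cast huv.ne'))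

lemma sum_ne_zero_of_mem_sector {ι : Type*} {s : Finset ι} (hs : s.Nonempty) {u v : ℂ}
    (huv : 0 < wedge u v) {w : ι → ℂ}
    (hw : ∀ i ∈ s, w i ≠ 0 ∧ 0 ≤ wedge u (w i) ∧ 0 ≤ wedge (w i) v) :
    ∑ i ∈ s, w i ≠ 0 := by
  intro hsum
  have hpos : 0 < wedge (u - v) (∑ i ∈ s, w i) := by
    rw [wedge_sum_right]
    exact sum_pos (fun i hi => wedge_sub_pos huv (hw i hi).2.1 (hw i hi).2.2 (hw i hi).1) hs
  rw [hsum, wedge_zero_right] at hpos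
  exact hpos.false

/-- `A`, `S`, `B` stand for the sums of a chain over `[0, d)`, `[d, e)` and `[e, m)`. -/
lemma wedge_mixed_nonneg {z A S B : ℂ} (hz : 0 ≤ z.im) (hAS : 0 ≤ wedge A S)
    (hSA : 0 ≤ wedge S (z * A)) (hSB : 0 ≤ wedge S B) (hBS : 0 ≤ wedge B (z * S)) :
    0 ≤ wedge (z * A + (S + B)) (z * (A + S) + B) := by
  have h : wedge (z * A + (S + B)) (z * (A + S) + B) =
      normSq z * wedge A S + wedge S (z * A) + normSq S * z.im + wedge B (z * S) + wedge S B := by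
    simp only [wedge_eq, mul_re, mul_im, add_re, add_im, normSq_apply]; ring
  rw [h]
  have := mul_nonneg (normSq_nonneg z) hAS
  have := mul_nonneg (normSq_nonneg S) hz
  linarith

lemma wedge_mixed_mul_nonneg {z A S B : ℂ} (hz : 0 ≤ z.im) (hAS : 0 ≤ wedge A S)
    (hSA : 0 ≤ wedge S (z * A)) (hSB : 0 ≤ wedge S B) (hBS : 0 ≤ wedge B (z * S)) :
    0 ≤ wedge (z * (A + S) + B) (z * (z * A + (S + B))) := by
  have h : wedge (z * (A + S) + B) (z * (z * A + (S + B))) =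
      normSq (z * A + B) * z.im + normSq z * (wedge S (z * A) + wedge A S + wedge S B) +
        wedge B (z * S) := by
    simp only [wedge_eq, mul_re, mul_im, add_re, add_im, normSq_apply]; ring
  rw [h]
  have := mul_nonneg (normSq_nonneg (z * A + B)) hz
  have := mul_nonneg (normSq_nonneg z) (add_nonneg (add_nonneg hSA hAS) hSB)
  linarith

end Wedge

section ArgChain

open Complex

/-- Up to the choice of arguments,
`arg (F 0) ≤ arg (F 1) ≤ ⋯ ≤ arg (F (m - 1)) ≤ arg (F 0) + arg z`. -/
structure IsArgChain (z : ℂ) (m : ℕ) (F : ℕ → ℂ) : Prop where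
  ne_zero : ∀ i < m, F i ≠ 0
  wedge_nonneg : ∀ i j, i ≤ j → j < m → 0 ≤ wedge (F i) (F j)
  wedge_mul_nonneg : ∀ i j, i ≤ j → j < m → 0 ≤ wedge (F j) (z * F i)

namespace IsArgChain

variable {z : ℂ} {m : ℕ} {F : ℕ → ℂ}

lemma of_one (hz : 0 ≤ z.im) (hF : F 0 ≠ 0) : IsArgChain z 1 F := by
  refine ⟨fun i hi => ?_, fun i j hij hj => ?_, fun i j hij hj => ?_⟩ <;>
    obtain rfl : i = 0 := by omega
  · exact hF
  · obtain rfl : j = 0 := by omega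
    exact (wedge_self _).ge
  · obtain rfl : j = 0 := by omega
    rw [wedge_self_mul]
    exact mul_nonneg (normSq_nonneg _) hz

lemma wedge_sum_nonneg (hF : IsArgChain z m F) {I J : Finset ℕ}
    (hIJ : ∀ i ∈ I, ∀ j ∈ J, i ≤ j ∧ j < m) :
    0 ≤ wedge (∑ i ∈ I, F i) (∑ j ∈ J, F j) ∧
      0 ≤ wedge (∑ j ∈ J, F j) (z * ∑ i ∈ I, F i) := by
  rw [wedge_sum_left, mul_sum, wedge_sum_left]
  simp_rw [wedge_sum_right]
  exact ⟨sum_nonneg fun i hi => sum_nonneg fun j hj =>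
      hF.wedge_nonneg i j (hIJ i hi j hj).1 (hIJ i hi j hj).2,
    sum_nonneg fun j hj => sum_nonneg fun i hi =>
      hF.wedge_mul_nonneg i j (hIJ i hi j hj).1 (hIJ i hi j hj).2⟩

lemma mixedSum_ne_zero (hF : IsArgChain z m F) (hz : 0 < z.im) {d : ℕ} (hd : d < m) :
    mixedSum z F m d ≠ 0 := by
  have hz0 : z ≠ 0 := fun h => by simp [h] at hz
  rw [← sum_ite_mul_eq_mixedSum z F hd.le]
  refine sum_ne_zero_of_mem_sector ⟨d, mem_range.2 hd⟩ (u := F d) (v := z * F d) ?_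
    fun i hi => ?_
  · rw [wedge_self_mul]
    exact mul_pos (normSq_pos.2 (hF.ne_zero d hd)) hz
  have him := mem_range.1 hi
  split_ifs with hid
  · refine ⟨mul_ne_zero hz0 (hF.ne_zero i him), hF.wedge_mul_nonneg i d hid.le hd, ?_⟩
    rw [wedge_mul_mul]
    exact mul_nonneg (normSq_nonneg z) (hF.wedge_nonneg i d hid.le hd)
  · rw [one_mul]
    exact ⟨hF.ne_zero i him, hF.wedge_nonneg d i (not_lt.1 hid) him,
      hF.wedge_mul_nonneg d i (not_lt.1 hid) him⟩

lemma wedge_mixedSum_nonneg (hF : IsArgChain z m F) (hz : 0 ≤ z.im) {d e : ℕ} (hde : d ≤ e)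
    (hem : e ≤ m) :
    0 ≤ wedge (mixedSum z F m d) (mixedSum z F m e) ∧
      0 ≤ wedge (mixedSum z F m e) (z * mixedSum z F m d) := by
  have hAS := hF.wedge_sum_nonneg (I := range d) (J := Ico d e) fun i hi j hj => by
    simp only [mem_range, mem_Ico] at hi hj; omega
  have hSB := hF.wedge_sum_nonneg (I := Ico d e) (J := Ico e m) fun i hi j hj => by
    simp only [mem_Ico] at hi hj; omega
  rw [mixedSum, mixedSum, ← sum_Ico_consecutive _ hde hem, ← sum_range_add_sum_Ico _ hde]
  exact ⟨wedge_mixed_nonneg hz hAS.1 hAS.2 hSB.1 hSB.2,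
    wedge_mixed_mul_nonneg hz hAS.1 hAS.2 hSB.1 hSB.2⟩

lemma isArgChain_mixedSum (hF : IsArgChain z m F) (hz : 0 < z.im) (hm : 0 < m) :
    IsArgChain z (m + 1) (mixedSum z F m) := by
  refine ⟨fun d hd => ?_, fun d e hde he => (hF.wedge_mixedSum_nonneg hz.le hde (by omega)).1,
    fun d e hde he => (hF.wedge_mixedSum_nonneg hz.le hde (by omega)).2⟩
  rcases (Nat.lt_succ_iff.1 hd).lt_or_eq with hd | rfl
  · exact hF.mixedSum_ne_zero hz hd
  · have hzd : mixedSum z F d d = z * mixedSum z F d 0 := by simp [mixedSum]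
    rw [hzd]
    exact mul_ne_zero (fun h => by simp [h] at hz) (hF.mixedSum_ne_zero hz hm)

lemma of_eq_ofReal_mul (hF : IsArgChain z m F) {c : ℕ → ℝ} (hc : ∀ i < m, 0 < c i)
    {G : ℕ → ℂ} (hG : ∀ i < m, G i = c i * F i) : IsArgChain z m G := by
  refine ⟨fun i hi => ?_, fun i j hij hj => ?_, fun i j hij hj => ?_⟩
  · rw [hG i hi]
    exact mul_ne_zero (ofReal_ne_zero.2 (hc i hi).ne') (hF.ne_zero i hi)
  · rw [hG i (hij.trans_lt hj), hG j hj, wedge_ofReal_mul_ofReal]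
    exact mul_nonneg (mul_nonneg (hc i (hij.trans_lt hj)).le (hc j hj).le)
      (hF.wedge_nonneg i j hij hj)
  · rw [hG i (hij.trans_lt hj), hG j hj, mul_left_comm, wedge_ofReal_mul_ofReal]
    exact mul_nonneg (mul_nonneg (hc j hj).le (hc i (hij.trans_lt hj)).le)
      (hF.wedge_mul_nonneg i j hij hj)

end IsArgChain

end ArgChain

open Complex ComplexConjugate in
lemma realRooted_of_aeval_ne_zero {f : ℝ[X]} (hf : ∀ z : ℂ, 0 < z.im → aeval z f ≠ 0) :
    RealRooted f := by
  refine Or.inr (splits_iff_card_roots.1 ?_)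
  refine Splits.of_splits_map_of_injective (algebraMap ℝ ℂ).injective (IsAlgClosed.splits _)
    fun a ha => ⟨a.re, Complex.ext (by simp) ?_⟩
  by_cases hf0 : f = 0
  · simp [hf0] at ha
  have hroot : aeval a f = 0 := (mem_roots_map hf0).1 ha
  have hconj : aeval (conj a) f = 0 := by
    rw [show conj a = conjAe a from rfl, aeval_algHom_apply, hroot, map_zero]
  rcases lt_trichotomy a.im 0 with h | h | h
  · exact absurd hconj (hf _ (by simpa using h))
  · simp [h]
  · exact absurd hroot (hf a h)

lemma isArgChain_aeval_refinedQEulerian {q : ℝ} (hq : 0 < q) {z : ℂ} (hz : 0 < z.im) (n : ℕ) :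
    IsArgChain z (n + 1) fun a => aeval z (refinedQEulerian q n a) := by
  induction n with
  | zero =>
    exact IsArgChain.of_one hz.le (by simp [refinedQEulerian_zero_zero])
  | succ n ih =>
    refine (ih.isArgChain_mixedSum hz n.succ_pos).of_eq_ofReal_mul (c := fun b => q ^ b)
      (fun b _ => pow_pos hq b) fun b hb => ?_
    rw [refinedQEulerian_succ q n hb, map_mul, aeval_C, map_mixedSum, aeval_X]
    simp

/-- For every `n ≥ 1` and positive real `q`, the `q`-Eulerian polynomial
`A_n(x;q) = ∑_{w ∈ S_n} q^{inv(w)} x^{des(w)}` is real-rooted. -/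
theorem qEulerian_real_rooted (n : ℕ) (hn : 1 ≤ n) (q : ℝ) (hq : 0 < q) :
    RealRooted (∑ w : Equiv.Perm (Fin n), C (q ^ invP w) * X ^ desL (wordOf w)) := by
  obtain ⟨k, rfl⟩ : ∃ k, n = k + 1 := ⟨n - 1, by omega⟩
  refine realRooted_of_aeval_ne_zero fun z hz => ?_
  have hsum := sum_mul_refinedQEulerian q k 1
  simp only [Pi.one_apply, one_mul] at hsum
  have hne := (isArgChain_aeval_refinedQEulerian hq hz k).mixedSum_ne_zero hz k.succ_pos
  rw [← hsum, map_sum]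
  simpa [mixedSum] using hne
end

section
/- For every σ in A_n, ∑_{τ ∈ Σ(σ)} x^{edes_B(τ)} = (4x)^{lpeak(σ)} (1+x)^{n-1-2·lpeak(σ)}, where Σ(σ) is the set of all 2^{n-1} sign assignments τ with |τ_i| = σ_i. -/
open Polynomial

/-- Cartesian product of a list of multisets, as a multiset of lists. -/
def multisetProd : List (Multiset ℕ) → Multiset (List ℕ)
  | [] => {[]}
  | m :: ms => m.bind fun a => (multisetProd ms).map (a :: ·)

/-- The `k`-th factor of `A_n`: the multiset with `k+1-i` copies of `i` for `1 ≤ i ≤ k`. -/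
def factorA (k : ℕ) : Multiset ℕ :=
  (Finset.Icc 1 k).sum fun i => Multiset.replicate (k + 1 - i) i

/-- The multiset `A_n`, product of `factorA 1, …, factorA (n-1)`. -/
def An (n : ℕ) : Multiset (List ℕ) :=
  multisetProd ((List.range (n - 1)).map fun k => factorA (k + 1))

/-- The (0-indexed) descent set of `σ`: positions `j` with `σ_{j+1} ≥ σ_{j+2}`
(1-indexed descents `j+1`). -/
def desSet (σ : List ℕ) : Finset ℕ :=
  (Finset.range (σ.length - 1)).filter fun j => σ.getD (j + 1) 0 ≤ σ.getD j 0

/-- The number of left peaks of `σ`: descents `i` such that `i` is the first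
position or `i-1` is not a descent. -/
def lpeakA (σ : List ℕ) : ℕ :=
  ((desSet σ).filter fun j => j = 0 ∨ (j - 1) ∉ desSet σ).card

/-- `edes_B` of a signed word `t = (τ_1,…,τ_m)`: with `τ_0 := 0`, the number of
indices `i ∈ {0,…,m-1}` such that `τ_i > τ_{i+1}`, or `τ_i = τ_{i+1} > 0`. -/
def edesB (t : List ℤ) : ℕ :=
  ((Finset.range t.length).filter fun i =>
      (0 :: t).getD (i + 1) 0 < (0 :: t).getD i 0 ∨
      ((0 :: t).getD i 0 = (0 :: t).getD (i + 1) 0 ∧ 0 < (0 :: t).getD i 0)).card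

/-! ### auxiliary -/

/-- the signed entry -/
def sgn (k : ℕ) (b : Bool) : ℤ := if b then (k : ℤ) else -(k : ℤ)

lemma edesB_concat (t : List ℤ) (z : ℤ) :
    edesB (t ++ [z]) = edesB t +
      (if z < (0 :: t).getD t.length 0 ∨
          ((0 :: t).getD t.length 0 = z ∧ 0 < (0 :: t).getD t.length 0) then 1 else 0) := by
  classical
  have hlen : (t ++ [z]).length = t.length + 1 := by simp
  have hcons : (0 : ℤ) :: (t ++ [z]) = ((0 : ℤ) :: t) ++ [z] := by simp
  have hagree : ∀ i ≤ t.length, ((0:ℤ) :: (t ++ [z])).getD i 0 = ((0:ℤ) :: t).getD i 0 := by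
    intro i hi
    rw [hcons, List.getD_append]
    simpa using Nat.lt_succ_of_le hi
  have hlast : ((0:ℤ) :: (t ++ [z])).getD (t.length + 1) 0 = z := by
    rw [hcons, List.getD_append_right] <;> simp
  unfold edesB
  rw [hlen, Finset.range_add_one, Finset.filter_insert]
  have hmem : t.length ∉ Finset.range t.length := by simp
  have hfilter_eq :
      (Finset.range t.length).filter (fun i =>
        ((0:ℤ) :: (t ++ [z])).getD (i + 1) 0 < ((0:ℤ) :: (t ++ [z])).getD i 0 ∨
        (((0:ℤ) :: (t ++ [z])).getD i 0 = ((0:ℤ) :: (t ++ [z])).getD (i + 1) 0 ∧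
          0 < ((0:ℤ) :: (t ++ [z])).getD i 0)) =
      (Finset.range t.length).filter (fun i =>
        ((0:ℤ) :: t).getD (i + 1) 0 < ((0:ℤ) :: t).getD i 0 ∨
        (((0:ℤ) :: t).getD i 0 = ((0:ℤ) :: t).getD (i + 1) 0 ∧ 0 < ((0:ℤ) :: t).getD i 0)) := by
    apply Finset.filter_congr
    intro i hi
    simp only [Finset.mem_range] at hi
    rw [hagree i hi.le, hagree (i+1) hi]
  split_ifs with h1 h2 h2
  · rw [Finset.card_insert_of_notMem (fun hc => hmem (Finset.mem_of_mem_filter _ hc)), hfilter_eq]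
  · exfalso; apply h2
    rw [hagree t.length le_rfl, hlast] at h1
    exact h1
  · exfalso; apply h1
    rw [hagree t.length le_rfl, hlast]
    exact h2
  · rw [hfilter_eq]; ring

/-- sum over sign vectors splits off the last sign -/
lemma sum_snoc {M : Type*} [AddCommMonoid M] (m : ℕ) (f : (Fin (m + 1) → Bool) → M) :
    ∑ ε : Fin (m + 1) → Bool, f ε = ∑ b : Bool, ∑ ε : Fin m → Bool, f (Fin.snoc ε b) := by
  rw [← (Fintype.sum_equiv (Fin.snocEquiv fun _ => Bool)
      (fun p => f (Fin.snoc p.2 p.1)) f fun p => rfl), Fintype.sum_prod_type]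

noncomputable def Ssum (l : List ℕ) (a : ℕ) (b : Bool) : Polynomial ℝ :=
  ∑ ε : Fin l.length → Bool,
    X ^ edesB ((List.ofFn fun i => sgn (l.getD (↑i) 0) (ε i)) ++ [sgn a b])

lemma edesB_singleton (z : ℤ) : edesB [z] = if z < 0 then 1 else 0 := by
  unfold edesB
  simp only [List.length_singleton, Finset.range_one]
  rcases lt_or_ge z 0 with h | h
  · rw [if_pos h]
    rw [Finset.filter_singleton, if_pos] <;> simp [h]
  · rw [if_neg (not_lt.mpr h)]
    rw [Finset.filter_singleton, if_neg]
    · simp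
    · simp; omega

lemma Ssum_nil (a : ℕ) (ha : 1 ≤ a) (b : Bool) :
    Ssum [] a b = if b then 1 else X := by
  unfold Ssum
  have h1 : ∀ ε : Fin ([] : List ℕ).length → Bool,
      (List.ofFn fun i => sgn (([] : List ℕ).getD (↑i) 0) (ε i)) = ([] : List ℤ) := by
    intro ε; simp
  rw [Finset.sum_congr rfl fun ε _ => by rw [h1 ε]]
  rw [Finset.sum_const]
  have : (Finset.univ : Finset (Fin ([] : List ℕ).length → Bool)).card = 1 := by
    simp [List.length_nil]
  rw [this, one_smul, List.nil_append, edesB_singleton]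
  cases b with
  | true => simp [sgn]
  | false =>
      simp only [sgn, if_false, Bool.false_eq_true]
      rw [if_pos (by exact_mod_cast neg_neg_iff_pos.mpr (by exact_mod_cast ha))]
      simp

lemma cons_getD_last (t : List ℤ) (z : ℤ) :
    ((0:ℤ) :: (t ++ [z])).getD ((t ++ [z]).length) 0 = z := by
  have : ((0:ℤ) :: (t ++ [z])) = (((0:ℤ) :: t) ++ [z]) := rfl
  rw [this, List.getD_append_right] <;> simp

lemma Ssum_concat (l : List ℕ) (c a : ℕ) (b : Bool) :
    Ssum (l ++ [c]) a b =
      Ssum l c true *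
          X ^ (if sgn a b < sgn c true ∨ (sgn c true = sgn a b ∧ 0 < sgn c true)
            then 1 else 0) +
        Ssum l c false *
          X ^ (if sgn a b < sgn c false ∨ (sgn c false = sgn a b ∧ 0 < sgn c false)
            then 1 else 0) := by
  have hlen : (l ++ [c]).length = l.length + 1 := by simp
  unfold Ssum
  rw [hlen, sum_snoc, Fintype.sum_bool]
  have inner : ∀ (b' : Bool) (ε : Fin l.length → Bool),
      (List.ofFn fun i : Fin (l.length + 1) =>
          sgn ((l ++ [c]).getD (↑i) 0) ((Fin.snoc ε b' : Fin (l.length + 1) → Bool) i))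
        = (List.ofFn fun i : Fin l.length => sgn (l.getD (↑i) 0) (ε i)) ++ [sgn c b'] := by
    intro b' ε
    rw [List.ofFn_succ', List.concat_eq_append]
    congr 1
    · congr 1
      funext i
      rw [Fin.snoc_castSucc]
      congr 1
      rw [Fin.coe_castSucc]
      exact List.getD_append _ _ _ _ i.isLt
    · rw [Fin.snoc_last]
      congr 1
      rw [Fin.val_last, List.getD_append_right _ _ _ _ le_rfl]
      simp
  have step : ∀ b' : Bool,
      (∑ ε : Fin l.length → Bool,
          (X : Polynomial ℝ) ^ edesB
            ((List.ofFn fun i : Fin (l.length + 1) =>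
              sgn ((l ++ [c]).getD (↑i) 0) ((Fin.snoc ε b' : Fin (l.length + 1) → Bool) i)) ++ [sgn a b]))
        = Ssum l c b' *
            X ^ (if sgn a b < sgn c b' ∨ (sgn c b' = sgn a b ∧ 0 < sgn c b')
              then 1 else 0) := by
    intro b'
    rw [Finset.sum_congr rfl fun ε _ => by rw [inner b' ε]]
    unfold Ssum
    rw [Finset.sum_mul]
    apply Finset.sum_congr rfl
    intro ε _
    rw [edesB_concat, cons_getD_last, pow_add]
  rw [step true, step false]
  rfl

lemma mem_desSet_lt {σ' : List ℕ} {j : ℕ} (h : j ∈ desSet σ') : j < σ'.length - 1 :=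
  Finset.mem_range.mp (Finset.mem_filter.mp h).1

lemma desSet_concat (σ' : List ℕ) (a : ℕ) (h : σ' ≠ []) :
    desSet (σ' ++ [a]) =
      if a ≤ σ'.getD (σ'.length - 1) 0 then insert (σ'.length - 1) (desSet σ')
      else desSet σ' := by
  obtain ⟨m, hm⟩ : ∃ m, σ'.length = m + 1 :=
    ⟨σ'.length - 1, (Nat.succ_pred_eq_of_pos (List.length_pos_iff.mpr h)).symm⟩
  have hlen : (σ' ++ [a]).length = m + 2 := by simp [hm]
  have hlast : (σ' ++ [a]).getD (m + 1) 0 = a := by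
    rw [List.getD_append_right _ _ _ _ (by omega), hm]
    simp
  have hag : ∀ j ≤ m, (σ' ++ [a]).getD j 0 = σ'.getD j 0 := fun j hj =>
    List.getD_append _ _ _ _ (by omega)
  have hsub : desSet (σ' ++ [a]) =
      (Finset.range (m + 1)).filter fun j =>
        (σ' ++ [a]).getD (j + 1) 0 ≤ (σ' ++ [a]).getD j 0 := by
    unfold desSet; rw [hlen]
    norm_num
  rw [hsub, Finset.range_add_one, Finset.filter_insert]
  have hfe : ((Finset.range m).filter fun j =>
      (σ' ++ [a]).getD (j + 1) 0 ≤ (σ' ++ [a]).getD j 0) = desSet σ' := by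
    unfold desSet
    rw [hm]
    simp only [Nat.add_sub_cancel]
    apply Finset.filter_congr
    intro j hj
    have hj' := Finset.mem_range.mp hj
    rw [hag j (by omega), hag (j + 1) (by omega)]
  have hcond : ((σ' ++ [a]).getD (m + 1) 0 ≤ (σ' ++ [a]).getD m 0) ↔
      a ≤ σ'.getD (σ'.length - 1) 0 := by
    rw [hlast, hag m le_rfl, hm]; simp
  have hm1 : σ'.length - 1 = m := by omega
  split_ifs with h1 h2 h2
  · rw [hfe, hm1]
  · exact absurd (hcond.mp h1) h2
  · exact absurd (hcond.mpr h2) h1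
  · exact hfe

lemma lpeak_concat (σ' : List ℕ) (a : ℕ) (h : σ' ≠ []) :
    lpeakA (σ' ++ [a]) = lpeakA σ' +
      (if a ≤ σ'.getD (σ'.length - 1) 0 ∧
          (σ'.length = 1 ∨ σ'.getD (σ'.length - 2) 0 < σ'.getD (σ'.length - 1) 0)
        then 1 else 0) := by
  obtain ⟨m, hm⟩ : ∃ m, σ'.length = m + 1 :=
    ⟨σ'.length - 1, (Nat.succ_pred_eq_of_pos (List.length_pos_iff.mpr h)).symm⟩
  have e1 : σ'.length - 1 = m := by omega
  have e2 : σ'.length - 2 = m - 1 := by omega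
  rw [e1, e2, lpeakA, lpeakA, desSet_concat σ' a h, e1]
  have hmem : m - 1 ∈ desSet σ' ↔ 1 ≤ m ∧ σ'.getD m 0 ≤ σ'.getD (m - 1) 0 := by
    unfold desSet
    rw [hm]
    simp only [Nat.add_sub_cancel, Finset.mem_filter, Finset.mem_range]
    constructor
    · rintro ⟨h1, h2⟩
      refine ⟨by omega, ?_⟩
      rwa [show m - 1 + 1 = m from by omega] at h2
    · rintro ⟨h1, h2⟩
      exact ⟨by omega, by rwa [show m - 1 + 1 = m from by omega]⟩
  by_cases hd : a ≤ σ'.getD m 0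
  · rw [if_pos hd]
    have hnm : m ∉ desSet σ' := fun hc => by have := mem_desSet_lt hc; omega
    rw [Finset.filter_insert]
    have hfilter : ((desSet σ').filter fun j => j = 0 ∨ j - 1 ∉ insert m (desSet σ')) =
        (desSet σ').filter fun j => j = 0 ∨ j - 1 ∉ desSet σ' := by
      apply Finset.filter_congr
      intro j hj
      have hjm : j < m := by have := mem_desSet_lt hj; omega
      have hne : j - 1 ≠ m := by omega
      simp [Finset.mem_insert, hne]
    by_cases hp : ((m : ℕ) = 0 ∨ m - 1 ∉ insert m (desSet σ'))
    · have hcnd : a ≤ σ'.getD m 0 ∧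
          (σ'.length = 1 ∨ σ'.getD (m - 1) 0 < σ'.getD m 0) := by
        refine ⟨hd, ?_⟩
        rcases hp with h0 | hni
        · left; omega
        · rcases Nat.eq_zero_or_pos m with h0 | hpos
          · left; omega
          · right
            simp only [Finset.mem_insert, not_or, hmem] at hni
            have := hni.2
            omega
      rw [if_pos hp,
        Finset.card_insert_of_notMem (fun hc => hnm (Finset.mem_of_mem_filter _ hc)),
        hfilter, if_pos hcnd]
    · have hcnd : ¬(a ≤ σ'.getD m 0 ∧
          (σ'.length = 1 ∨ σ'.getD (m - 1) 0 < σ'.getD m 0)) := by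
        rintro ⟨-, h1 | hlt⟩
        · exact hp (Or.inl (by omega))
        · apply hp
          rcases Nat.eq_zero_or_pos m with h0 | hpos
          · exact Or.inl h0
          · right
            simp only [Finset.mem_insert, not_or, hmem]
            exact ⟨by omega, by omega⟩
      rw [if_neg hp, hfilter, if_neg hcnd, add_zero]
  · rw [if_neg hd, if_neg (fun hc => hd hc.1), add_zero]

lemma lpeak_singleton (a : ℕ) : lpeakA [a] = 0 := by
  simp [lpeakA, desSet]

lemma indTT (a c : ℕ) (hc : 1 ≤ c) :
    (if sgn a true < sgn c true ∨ (sgn c true = sgn a true ∧ 0 < sgn c true)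
      then 1 else 0 : ℕ) = if a ≤ c then 1 else 0 := by
  simp only [sgn, if_true]
  split_ifs <;> omega

lemma indTF (a c : ℕ) (hc : 1 ≤ c) :
    (if sgn a false < sgn c true ∨ (sgn c true = sgn a false ∧ 0 < sgn c true)
      then 1 else 0 : ℕ) = 1 := by
  simp only [sgn, Bool.false_eq_true, if_false, if_true]
  split_ifs <;> omega

lemma indFT (a c : ℕ) :
    (if sgn a true < sgn c false ∨ (sgn c false = sgn a true ∧ 0 < sgn c false)
      then 1 else 0 : ℕ) = 0 := by
  simp only [sgn, Bool.false_eq_true, if_false, if_true]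
  split_ifs <;> omega

lemma indFF (a c : ℕ) :
    (if sgn a false < sgn c false ∨ (sgn c false = sgn a false ∧ 0 < sgn c false)
      then 1 else 0 : ℕ) = if c < a then 1 else 0 := by
  simp only [sgn, Bool.false_eq_true, if_false, if_true]
  split_ifs <;> omega

lemma len_concat_sub_one (l : List ℕ) (c : ℕ) : (l ++ [c]).length - 1 = l.length := by
  simp

lemma getD_concat_last (l : List ℕ) (c : ℕ) : (l ++ [c]).getD l.length 0 = c := by
  rw [List.getD_append_right _ _ _ _ le_rfl]
  simp

lemma main_lemma (l : List ℕ) : ∀ a : ℕ, 1 ≤ a → (∀ x ∈ l, 1 ≤ x) →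
    ((l = [] ∨ l.getD (l.length - 1) 0 < a) →
        2 * lpeakA (l ++ [a]) ≤ l.length ∧
        Ssum l a true =
          (C (4:ℝ) * X) ^ lpeakA (l ++ [a]) *
            (1 + X) ^ (l.length - 2 * lpeakA (l ++ [a])) ∧
        Ssum l a false = X * Ssum l a true) ∧
    ((l ≠ [] ∧ a ≤ l.getD (l.length - 1) 0) →
        2 * lpeakA (l ++ [a]) ≤ l.length + 1 ∧
        Ssum l a true =
          C (2⁻¹:ℝ) *
            ((C (4:ℝ) * X) ^ lpeakA (l ++ [a]) *
              (1 + X) ^ (l.length + 1 - 2 * lpeakA (l ++ [a]))) ∧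
        Ssum l a false = Ssum l a true) := by
  induction l using List.reverseRecOn with
  | nil =>
      intro a ha _
      constructor
      · intro _
        simp only [List.nil_append, List.length_nil, lpeak_singleton]
        refine ⟨by omega, ?_, ?_⟩
        · rw [Ssum_nil a ha true]
          simp
        · rw [Ssum_nil a ha false, Ssum_nil a ha true]
          simp
      · rintro ⟨h, -⟩
        exact absurd rfl h
  | append_singleton l c ih =>
      intro a ha hpos
      have hc : 1 ≤ c := hpos c (by simp)
      have hl : ∀ x ∈ l, 1 ≤ x := fun x hx => hpos x (by simp [hx])
      have ihc := ih c hc hl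
      have hne : l ++ [c] ≠ [] := by simp
      have hlen2 : (l ++ [c]).length = l.length + 1 := by simp
      have e1 : (l ++ [c]).length - 1 = l.length := len_concat_sub_one l c
      have eg : (l ++ [c]).getD ((l ++ [c]).length - 1) 0 = c := by
        rw [e1]; exact getD_concat_last l c
      have hlen1 : ((l ++ [c]).length = 1) ↔ l = [] := by simp
      have e2 : l ≠ [] →
          (l ++ [c]).getD ((l ++ [c]).length - 2) 0 = l.getD (l.length - 1) 0 := by
        intro h0
        have hL : 1 ≤ l.length := List.length_pos_iff.mpr h0
        have h3 : (l ++ [c]).length - 2 = l.length - 1 := by rw [hlen2]; omega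
        rw [h3, List.getD_append _ _ _ _ (by omega)]
      have eTT := Ssum_concat l c a true
      rw [indTT a c hc, indFT a c] at eTT
      have eTF := Ssum_concat l c a false
      rw [indTF a c hc, indFF a c] at eTF
      have hpk := lpeak_concat (l ++ [c]) a hne
      rw [eg] at hpk
      have hhalf : (C (2⁻¹:ℝ) : Polynomial ℝ) + C (2⁻¹:ℝ) = 1 := by
        rw [← C_add]
        norm_num
      have h42 : (C (4:ℝ) : Polynomial ℝ) * C (2⁻¹:ℝ) = 2 := by
        rw [← C_mul, show (4:ℝ) * 2⁻¹ = 2 from by norm_num]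
        exact map_ofNat C 2
      by_cases hca : c < a
      · -- outer ascent
        have hpk' : lpeakA (l ++ [c] ++ [a]) = lpeakA (l ++ [c]) := by
          rw [hpk, if_neg, add_zero]
          rintro ⟨h1, -⟩
          omega
        constructor
        · intro _
          rw [hpk', hlen2]
          rw [if_neg (by omega), pow_zero] at eTT
          rw [if_pos hca, pow_one] at eTF
          by_cases hin : l = [] ∨ l.getD (l.length - 1) 0 < c
          · obtain ⟨hb, hT, hF⟩ := ihc.1 hin
            refine ⟨by omega, ?_, ?_⟩
            · rw [eTT, hF, hT,
                show l.length + 1 - 2 * lpeakA (l ++ [c]) =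
                  (l.length - 2 * lpeakA (l ++ [c])) + 1 from by omega,
                pow_succ]
              ring
            · rw [eTF, eTT, hF]
              ring
          · push_neg at hin
            obtain ⟨hb, hT, hF⟩ := ihc.2 ⟨hin.1, hin.2⟩
            refine ⟨by omega, ?_, ?_⟩
            · rw [eTT, hF, hT]
              linear_combination ((C (4:ℝ) * X) ^ lpeakA (l ++ [c]) *
                (1 + X) ^ (l.length + 1 - 2 * lpeakA (l ++ [c]))) * hhalf
            · rw [eTF, eTT, hF]
              ring
        · rintro ⟨-, hle⟩
          rw [eg] at hle
          omega
      · -- outer descent: a ≤ c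
        have hca' : a ≤ c := by omega
        constructor
        · rintro (h0 | hlt)
          · exact absurd h0 hne
          · rw [eg] at hlt
            omega
        · intro _
          rw [if_pos hca', pow_one, pow_zero] at eTT
          rw [if_neg (by omega), pow_zero, pow_one] at eTF
          by_cases hin : l = [] ∨ l.getD (l.length - 1) 0 < c
          · -- inner ascent: new left peak
            have hpk' : lpeakA (l ++ [c] ++ [a]) = lpeakA (l ++ [c]) + 1 := by
              rw [hpk, if_pos]
              refine ⟨hca', ?_⟩
              by_cases h0 : l = []
              · exact Or.inl (hlen1.mpr h0)
              · rcases hin with h0' | hlt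
                · exact absurd h0' h0
                · right
                  rw [e2 h0]
                  exact hlt
            obtain ⟨hb, hT, hF⟩ := ihc.1 hin
            rw [hpk', hlen2]
            refine ⟨by omega, ?_, ?_⟩
            · rw [eTT, hF, hT,
                show l.length + 1 + 1 - 2 * (lpeakA (l ++ [c]) + 1) =
                  l.length - 2 * lpeakA (l ++ [c]) from by omega,
                pow_succ]
              linear_combination (-(X * (C (4:ℝ) * X) ^ lpeakA (l ++ [c]) *
                (1 + X) ^ (l.length - 2 * lpeakA (l ++ [c])))) * h42
            · rw [eTF, eTT, hF, hT]
          · -- inner descent: no new left peak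
            push_neg at hin
            have hpk' : lpeakA (l ++ [c] ++ [a]) = lpeakA (l ++ [c]) := by
              rw [hpk, if_neg, add_zero]
              rintro ⟨-, hq | hq⟩
              · exact hin.1 (hlen1.mp hq)
              · rw [e2 hin.1] at hq
                omega
            obtain ⟨hb, hT, hF⟩ := ihc.2 ⟨hin.1, hin.2⟩
            rw [hpk', hlen2]
            refine ⟨by omega, ?_, ?_⟩
            · rw [eTT, hF, hT,
                show l.length + 1 + 1 - 2 * lpeakA (l ++ [c]) =
                  (l.length + 1 - 2 * lpeakA (l ++ [c])) + 1 from by omega,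
                pow_succ]
              ring
            · rw [eTF, eTT, hF]

lemma ofFn_snoc_eq (l : List ℕ) (c : ℕ) (b' : Bool) (ε : Fin l.length → Bool) :
    (List.ofFn fun i : Fin (l.length + 1) =>
        sgn ((l ++ [c]).getD (↑i) 0) ((Fin.snoc ε b' : Fin (l.length + 1) → Bool) i))
      = (List.ofFn fun i : Fin l.length => sgn (l.getD (↑i) 0) (ε i)) ++ [sgn c b'] := by
  rw [List.ofFn_succ', List.concat_eq_append]
  congr 1
  · congr 1
    funext i
    rw [Fin.snoc_castSucc]
    congr 1
    rw [Fin.coe_castSucc]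
    exact List.getD_append _ _ _ _ i.isLt
  · rw [Fin.snoc_last]
    congr 1
    rw [Fin.val_last, List.getD_append_right _ _ _ _ le_rfl]
    simp

lemma SW_eq (l : List ℕ) (a : ℕ) :
    (∑ ε : Fin (l ++ [a]).length → Bool,
        (X : Polynomial ℝ) ^ edesB (List.ofFn fun i => sgn ((l ++ [a]).getD (↑i) 0) (ε i)))
      = Ssum l a true + Ssum l a false := by
  have hlen : (l ++ [a]).length = l.length + 1 := by simp
  rw [hlen, sum_snoc, Fintype.sum_bool]
  have step : ∀ b' : Bool,
      (∑ ε : Fin l.length → Bool,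
          (X : Polynomial ℝ) ^ edesB (List.ofFn fun i : Fin (l.length + 1) =>
            sgn ((l ++ [a]).getD (↑i) 0) ((Fin.snoc ε b' : Fin (l.length + 1) → Bool) i)))
        = Ssum l a b' := by
    intro b'
    rw [Finset.sum_congr rfl fun ε _ => by rw [ofFn_snoc_eq l a b' ε]]
    rfl
  rw [step true, step false]

lemma multisetProd_mem {L : List (Multiset ℕ)} {τ : List ℕ} (h : τ ∈ multisetProd L) :
    τ.length = L.length ∧ ∀ x ∈ τ, ∃ m ∈ L, x ∈ m := by
  induction L generalizing τ with
  | nil =>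
      simp only [multisetProd, Multiset.mem_singleton] at h
      subst h
      simp
  | cons mhd tl ih =>
      simp only [multisetProd, Multiset.mem_bind, Multiset.mem_map] at h
      obtain ⟨x, hx, τ', hτ', rfl⟩ := h
      obtain ⟨h1, h2⟩ := ih hτ'
      refine ⟨by simp [h1], ?_⟩
      intro y hy
      rcases List.mem_cons.mp hy with rfl | hy'
      · exact ⟨mhd, by simp, hx⟩
      · obtain ⟨m, hm, hym⟩ := h2 y hy'
        exact ⟨m, by simp [hm], hym⟩

lemma factorA_pos {k x : ℕ} (h : x ∈ factorA k) : 1 ≤ x := by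
  unfold factorA at h
  rw [Multiset.mem_sum] at h
  obtain ⟨i, hi, hx⟩ := h
  rw [Multiset.eq_of_mem_replicate hx]
  exact (Finset.mem_Icc.mp hi).1

/-- For every `σ ∈ A_n`, summing `x^{edes_B(τ)}` over all `2^{n-1}` sign
assignments `τ` of `σ` gives `(4x)^{lpeak(σ)} (1+x)^{n-1-2·lpeak(σ)}`. -/
theorem signed_edesB_sum (n : ℕ) (hn : 2 ≤ n) (σ : List ℕ) (hσ : σ ∈ An n) :
    (∑ ε : Fin σ.length → Bool,
        (X : Polynomial ℝ) ^
          edesB (List.ofFn fun i => if ε i then (σ.get i : ℤ) else -(σ.get i : ℤ)))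
      = (C (4 : ℝ) * X) ^ lpeakA σ * (1 + X) ^ (n - 1 - 2 * lpeakA σ) := by
  unfold An at hσ
  obtain ⟨hlen, hmem⟩ := multisetProd_mem hσ
  simp only [List.length_map, List.length_range] at hlen
  have hpos : ∀ x ∈ σ, 1 ≤ x := by
    intro x hx
    obtain ⟨m, hm, hxm⟩ := hmem x hx
    obtain ⟨k, -, rfl⟩ := List.mem_map.mp hm
    exact factorA_pos hxm
  have hσne : σ ≠ [] := by
    intro h0
    rw [h0] at hlen
    simp at hlen
    omega
  obtain ⟨l, a, rfl⟩ : ∃ l a, σ = l ++ [a] :=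
    ⟨σ.dropLast, σ.getLast hσne, (List.dropLast_append_getLast hσne).symm⟩
  have ha : 1 ≤ a := hpos a (by simp)
  have hl : ∀ x ∈ l, 1 ≤ x := fun x hx => hpos x (by simp [hx])
  have hL : l.length + 1 = n - 1 := by
    rw [← hlen]; simp
  have hconv : (∑ ε : Fin (l ++ [a]).length → Bool,
      (X : Polynomial ℝ) ^
        edesB (List.ofFn fun i => if ε i then ((l ++ [a]).get i : ℤ)
          else -((l ++ [a]).get i : ℤ)))
      = ∑ ε : Fin (l ++ [a]).length → Bool,
        (X : Polynomial ℝ) ^ edesB (List.ofFn fun i => sgn ((l ++ [a]).getD (↑i) 0) (ε i)) := by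
    apply Finset.sum_congr rfl
    intro ε _
    congr 1
    congr 1
    exact congrArg List.ofFn (funext fun i => by
      rw [List.getD_eq_getElem _ 0 i.isLt]
      simp [sgn, List.get_eq_getElem])
  rw [hconv, SW_eq]
  by_cases hin : l = [] ∨ l.getD (l.length - 1) 0 < a
  · obtain ⟨hb, hT, hF⟩ := (main_lemma l a ha hl).1 hin
    rw [hF, hT,
      show n - 1 - 2 * lpeakA (l ++ [a]) = (l.length - 2 * lpeakA (l ++ [a])) + 1 from
        by omega,
      pow_succ]
    ring
  · push_neg at hin
    obtain ⟨hb, hT, hF⟩ := (main_lemma l a ha hl).2 ⟨hin.1, hin.2⟩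
    have hhalf : (C (2⁻¹:ℝ) : Polynomial ℝ) + C (2⁻¹:ℝ) = 1 := by
      rw [← C_add]
      norm_num
    rw [hF, hT,
      show n - 1 - 2 * lpeakA (l ++ [a]) = l.length + 1 - 2 * lpeakA (l ++ [a]) from
        by omega]
    linear_combination ((C (4:ℝ) * X) ^ lpeakA (l ++ [a]) *
      (1 + X) ^ (l.length + 1 - 2 * lpeakA (l ++ [a]))) * hhalf
end
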